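/- The marked-edge plus-amplitude of the star-graph walk is uniformly approximated by sin(λ_M t): for every ε > 0 there exists M₀ such that for all M ≥ M₀ and all t ∈ ℕ, |(A^t X₀)₃ − sin(λ_M · t)| < ε, where λ_M = arccos((M−1)/M). -/

import Mathlib

/-- The reduced `3 × 3` transition matrix of the star-graph quantum walk with `M` edges:
rows `(0, (M−2)/M, −2/M)`, `(1, 0, 0)`, `(0, 2(M−1)/M, (M−2)/M)`. -/
noncomputable def starA (M : ℕ) : Matrix (Fin 3) (Fin 3) ℂ :=
  !![0, ((M : ℂ) - 2) / M, -2 / M;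
     1, 0, 0;
     0, 2 * ((M : ℂ) - 1) / M, ((M : ℂ) - 2) / M]

/-- The reduced initial vector `X₀ = (1/√(2M))·(1,1,1)ᵀ`. -/
noncomputable def starX0 (M : ℕ) : Fin 3 → ℂ :=
  fun _ => ((1 / Real.sqrt (2 * M) : ℝ) : ℂ)

/-- `λ_M = arccos((M−1)/M)`. -/
noncomputable def starLam (M : ℕ) : ℝ :=
  Real.arccos (((M : ℝ) - 1) / M)

/-! The matrix `A` has eigenvalue `-1` with eigenvector `(1, -1, 1)`, and it acts as the rotation
by `λ_M` on the plane spanned by `P = (2(M-1), 2M, 2(M-1))` and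
`Q = (-2√(2M-1), 0, 2(M-1)√(2M-1))`, because `cos λ_M = (M-1)/M` and `sin λ_M = √(2M-1)/M`.
Since `X₀` is a multiple of `(1, -1, 1) + P`, this gives `A^t X₀` in closed form; its third
coordinate is `sin(λ_M t)` up to an error of at most `1/√(2M) + 1/M`. -/

open Real Matrix Filter Topology

theorem Module.End.pow_apply_of_apply_eq_smul {R M : Type*} [CommSemiring R] [AddCommMonoid M]
    [Module R M] {f : Module.End R M} {μ : R} {v : M} (hv : f v = μ • v) (n : ℕ) :
    (f ^ n) v = μ ^ n • v := by
  induction n with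
  | zero => simp
  | succ n ih => rw [pow_succ', Module.End.mul_apply, ih, map_smul, hv, smul_smul, pow_succ]

theorem Module.End.pow_apply_eq_cos_smul_add_sin_smul {𝕜 E : Type*} [RCLike 𝕜] [AddCommGroup E]
    [Module 𝕜 E] {f : Module.End 𝕜 E} {θ : ℝ} {P Q : E}
    (hP : f P = (cos θ : 𝕜) • P + (sin θ : 𝕜) • Q) (hQ : f Q = (cos θ : 𝕜) • Q - (sin θ : 𝕜) • P)
    (t : ℕ) : (f ^ t) P = (cos (θ * t) : 𝕜) • P + (sin (θ * t) : 𝕜) • Q := by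
  induction t with
  | zero => simp
  | succ t ih =>
    rw [pow_succ', Module.End.mul_apply, ih, map_add, map_smul, map_smul, hP, hQ]
    push_cast
    rw [mul_add, mul_one, cos_add, sin_add]
    push_cast
    module

theorem abs_two_mul_sub_one_mul_sqrt_div_sub_one_le {m : ℝ} (hm : 1 ≤ m) :
    |2 * (m - 1) * √(2 * m - 1) / ((2 * m - 1) * √(2 * m)) - 1| ≤ 1 / m := by
  have hr : 0 < √(2 * m - 1) := sqrt_pos.2 (by linarith)
  have hk : 0 < √(2 * m) := sqrt_pos.2 (by linarith)
  have hlow : 2 * m - 1 ≤ √(2 * m - 1) * √(2 * m) := by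
    nlinarith [sq_sqrt (by linarith : (0 : ℝ) ≤ 2 * m - 1),
      sqrt_le_sqrt (by linarith : 2 * m - 1 ≤ 2 * m)]
  have hup : √(2 * m - 1) * √(2 * m) ≤ 2 * m := by
    nlinarith [sq_sqrt (by linarith : (0 : ℝ) ≤ 2 * m),
      sqrt_le_sqrt (by linarith : 2 * m - 1 ≤ 2 * m)]
  have hw : 2 * (m - 1) * √(2 * m - 1) / ((2 * m - 1) * √(2 * m))
      = (2 * m - 2) / (√(2 * m - 1) * √(2 * m)) := by
    have : 2 * m - 1 ≠ 0 := by linarith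
    field_simp
    rw [sq_sqrt (by linarith)]
  rw [hw, abs_sub_comm, abs_of_nonneg (by rw [sub_nonneg, div_le_one (by positivity)]; linarith),
    sub_le_comm, le_div_iff₀ (by positivity)]
  calc (1 - 1 / m) * (√(2 * m - 1) * √(2 * m)) ≤ (1 - 1 / m) * (2 * m) := by
        gcongr; exact sub_nonneg.2 ((div_le_one (by positivity)).2 hm)
    _ = 2 * m - 2 := by field_simp

theorem abs_amplitude_sub_sin_le {m e C S : ℝ} (hm : 1 ≤ m) (he : |e| ≤ 1) (hC : |C| ≤ 1)
    (hS : |S| ≤ 1) :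
    |(e + 2 * (m - 1) * C + 2 * (m - 1) * √(2 * m - 1) * S) / ((2 * m - 1) * √(2 * m)) - S|
      ≤ 1 / √(2 * m) + 1 / m := by
  have hd : 0 < 2 * m - 1 := by linarith
  have hk : 0 < √(2 * m) := sqrt_pos.2 (by linarith)
  have hnum : |e + 2 * (m - 1) * C| ≤ 2 * m - 1 := by
    calc |e + 2 * (m - 1) * C| ≤ |e| + 2 * (m - 1) * |C| := by
          grw [abs_add_le, abs_mul, abs_of_nonneg (by linarith : 0 ≤ 2 * (m - 1))]
      _ ≤ 1 + 2 * (m - 1) * 1 := by gcongr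
      _ = 2 * m - 1 := by ring
  have hsplit :
      (e + 2 * (m - 1) * C + 2 * (m - 1) * √(2 * m - 1) * S) / ((2 * m - 1) * √(2 * m)) - S
      = (e + 2 * (m - 1) * C) / ((2 * m - 1) * √(2 * m))
        + (2 * (m - 1) * √(2 * m - 1) / ((2 * m - 1) * √(2 * m)) - 1) * S := by
    ring
  rw [hsplit]
  calc _ ≤ |(e + 2 * (m - 1) * C) / ((2 * m - 1) * √(2 * m))|
        + |2 * (m - 1) * √(2 * m - 1) / ((2 * m - 1) * √(2 * m)) - 1| * |S| := by
        grw [abs_add_le, abs_mul]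
    _ ≤ (2 * m - 1) / ((2 * m - 1) * √(2 * m)) + 1 / m * 1 := by
        rw [abs_div, abs_of_pos (mul_pos hd hk)]
        gcongr
        exact abs_two_mul_sub_one_mul_sqrt_div_sub_one_le hm
    _ = 1 / √(2 * m) + 1 / m := by field_simp

theorem cos_starLam {M : ℕ} (hM : 1 ≤ M) : cos (starLam M) = ((M : ℝ) - 1) / M := by
  have hm : (1 : ℝ) ≤ M := by exact_mod_cast hM
  refine cos_arccos ?_ ((div_le_one (by positivity)).2 (by linarith))
  linarith [div_nonneg (by linarith : (0 : ℝ) ≤ M - 1) (by positivity : (0 : ℝ) ≤ M)]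

theorem sin_starLam {M : ℕ} (hM : 1 ≤ M) : sin (starLam M) = √(2 * (M : ℝ) - 1) / M := by
  have hm : (1 : ℝ) ≤ M := by exact_mod_cast hM
  have h : 1 - (((M : ℝ) - 1) / M) ^ 2 = (2 * (M : ℝ) - 1) / M ^ 2 := by field_simp; ring
  rw [starLam, sin_arccos, h, sqrt_div (by linarith), sqrt_sq (by positivity)]

def starNegVec : Fin 3 → ℂ :=
  ![1, -1, 1]

noncomputable def starCosVec (M : ℕ) : Fin 3 → ℂ :=
  ![2 * ((M : ℂ) - 1), 2 * M, 2 * ((M : ℂ) - 1)]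

noncomputable def starSinVec (M : ℕ) : Fin 3 → ℂ :=
  ![-2 * (√(2 * (M : ℝ) - 1) : ℂ), 0, 2 * ((M : ℂ) - 1) * (√(2 * (M : ℝ) - 1) : ℂ)]

theorem starA_mulVec_starNegVec {M : ℕ} (hM : M ≠ 0) :
    starA M *ᵥ starNegVec = -starNegVec := by
  have hm : (M : ℂ) ≠ 0 := by exact_mod_cast hM
  ext i
  fin_cases i <;> simp [starA, starNegVec, mulVec, dotProduct, Fin.sum_univ_three] <;>
    field_simp <;> ring

theorem starA_mulVec_starCosVec {M : ℕ} (hM : 1 ≤ M) :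
    starA M *ᵥ starCosVec M =
      (cos (starLam M) : ℂ) • starCosVec M + (sin (starLam M) : ℂ) • starSinVec M := by
  have hm : (M : ℂ) ≠ 0 := by exact_mod_cast (by omega : M ≠ 0)
  have hr : ((√(2 * (M : ℝ) - 1) : ℝ) : ℂ) ^ 2 = 2 * M - 1 := by
    have : (1 : ℝ) ≤ M := by exact_mod_cast hM
    rw [← Complex.ofReal_pow, sq_sqrt (by linarith)]
    push_cast; ring
  rw [cos_starLam hM, sin_starLam hM]
  push_cast
  ext i
  fin_cases i <;> simp [starA, starCosVec, starSinVec, mulVec, dotProduct, Fin.sum_univ_three] <;>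
    field_simp <;> rw [hr] <;> ring

theorem starA_mulVec_starSinVec {M : ℕ} (hM : 1 ≤ M) :
    starA M *ᵥ starSinVec M =
      (cos (starLam M) : ℂ) • starSinVec M - (sin (starLam M) : ℂ) • starCosVec M := by
  have hm : (M : ℂ) ≠ 0 := by exact_mod_cast (by omega : M ≠ 0)
  rw [cos_starLam hM, sin_starLam hM]
  push_cast
  ext i
  fin_cases i <;> simp [starA, starCosVec, starSinVec, mulVec, dotProduct, Fin.sum_univ_three] <;>
    field_simp <;> ring

theorem starX0_eq_smul {M : ℕ} (hM : 1 ≤ M) :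
    starX0 M = ((1 / ((2 * M - 1) * √(2 * M)) : ℝ) : ℂ) • (starNegVec + starCosVec M) := by
  have hm : (2 * M - 1 : ℂ) ≠ 0 := by
    have : (1 : ℝ) ≤ M := by exact_mod_cast hM
    exact_mod_cast (by linarith : (2 * M - 1 : ℝ) ≠ 0)
  ext i
  fin_cases i <;> simp [starX0, starNegVec, starCosVec] <;> field_simp <;> ring

theorem starA_pow_mulVec_starX0 {M : ℕ} (hM : 1 ≤ M) (t : ℕ) :
    (starA M ^ t) *ᵥ starX0 M = ((1 / ((2 * M - 1) * √(2 * M)) : ℝ) : ℂ) •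
      ((-1 : ℂ) ^ t • starNegVec + (cos (starLam M * t) : ℂ) • starCosVec M
        + (sin (starLam M * t) : ℂ) • starSinVec M) := by
  have hneg : (toLin' (starA M) ^ t) starNegVec = (-1 : ℂ) ^ t • starNegVec :=
    Module.End.pow_apply_of_apply_eq_smul (f := toLin' (starA M))
      (by rw [toLin'_apply, starA_mulVec_starNegVec (by omega), neg_one_smul]) t
  have hrot := Module.End.pow_apply_eq_cos_smul_add_sin_smul (f := toLin' (starA M))
    (starA_mulVec_starCosVec hM) (starA_mulVec_starSinVec hM) t
  rw [starX0_eq_smul hM, ← toLin'_apply, toLin'_pow, map_smul, map_add, hneg, hrot, add_assoc]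
  -- the sides differ only in the `SMul` instance on `Fin 3 → ℂ` (module vs. pointwise)
  rfl

theorem starA_pow_mulVec_starX0_two {M : ℕ} (hM : 1 ≤ M) (t : ℕ) :
    ((starA M ^ t) *ᵥ starX0 M) 2 =
      (((-1) ^ t + 2 * (M - 1) * cos (starLam M * t)
        + 2 * (M - 1) * √(2 * M - 1) * sin (starLam M * t))
        / ((2 * M - 1) * √(2 * M)) : ℝ) := by
  rw [starA_pow_mulVec_starX0 hM]
  simp only [Pi.smul_apply, Pi.add_apply, smul_eq_mul, starNegVec, starCosVec, starSinVec]
  push_cast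
  ring

theorem norm_starA_pow_mulVec_starX0_two_sub_sin_le {M : ℕ} (hM : 1 ≤ M) (t : ℕ) :
    ‖((starA M ^ t) *ᵥ starX0 M) 2 - ((sin (starLam M * t) : ℝ) : ℂ)‖
      ≤ 1 / √(2 * M) + 1 / M := by
  rw [starA_pow_mulVec_starX0_two hM, ← Complex.ofReal_sub, Complex.norm_real, norm_eq_abs]
  exact abs_amplitude_sub_sin_le (by exact_mod_cast hM) (by simp [abs_pow])
    (abs_cos_le_one _) (abs_sin_le_one _)

/-- The marked-edge plus-amplitude `(A^t X₀)₃ = ψ⁺ 0 (t)` of the star-graph walk is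
uniformly approximated by `sin(λ_M t)`: for every `ε > 0` there is `M₀` such that for all
`M ≥ M₀` and all `t ∈ ℕ`, `|(A^t X₀)₃ − sin(λ_M t)| < ε`. -/
theorem starWalk_marked_amplitude_approx_sin :
    ∀ ε : ℝ, 0 < ε → ∃ M₀ : ℕ, ∀ M : ℕ, M₀ ≤ M → ∀ t : ℕ,
      ‖((starA M ^ t).mulVec (starX0 M)) 2 -
        ((Real.sin (starLam M * t) : ℝ) : ℂ)‖ < ε := by
  intro ε hε
  have hbound : Tendsto (fun M : ℕ => 1 / √(2 * M) + 1 / M) atTop (𝓝 0) := by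
    simpa using ((tendsto_inv_atTop_zero.comp (tendsto_sqrt_atTop.comp
      (tendsto_natCast_atTop_atTop.const_mul_atTop two_pos))).add
        tendsto_one_div_atTop_nhds_zero_nat)
  obtain ⟨M₀, hM₀⟩ := eventually_atTop.1 (hbound.eventually (gt_mem_nhds hε))
  exact ⟨max M₀ 1, fun M hM t => (norm_starA_pow_mulVec_starX0_two_sub_sin_le
    (le_of_max_le_right hM) t).trans_lt (hM₀ M (le_of_max_le_left hM))⟩
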